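/- arXiv:1608.03281 — 5 statements merged into one kernel-verified Lean document; each statement's English description precedes it below -/
import Mathlib

section
/- Let p and q be probability distributions on a finite product set U × V. Fix v ∈ V with p_V(v) > 0 and q_V(v) > 0, and define conditional distributions p(u|v) = p(u,v)/p_V(v) and similarly for q. Then Σ_u |p(u|v) − q(u|v)| ≤ (Σ_u |p(u,v) − q(u,v)| + |p_V(v) − q_V(v)|) / H(p_V(v), q_V(v)), where H(x,y) = 2xy/(x+y) is the harmonic mean. -/
/-- Harmonic-mean bound on the distance between conditional distributions:
`Σ_u |p(u|v) − q(u|v)| ≤ (Σ_u |p(u,v) − q(u,v)| + |p_V(v) − q_V(v)|) / H(p_V(v), q_V(v))`. -/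
theorem conditional_tvd_harmonic_bound {U V : Type*} [Fintype U] [Fintype V]
    (p q : U × V → ℝ)
    (hp0 : ∀ x, 0 ≤ p x) (hp1 : ∑ x, p x = 1)
    (hq0 : ∀ x, 0 ≤ q x) (hq1 : ∑ x, q x = 1)
    (v : V)
    (hpv : 0 < ∑ u : U, p (u, v)) (hqv : 0 < ∑ u : U, q (u, v)) :
    ∑ u : U, |p (u, v) / (∑ u' : U, p (u', v)) - q (u, v) / (∑ u' : U, q (u', v))| ≤
      ((∑ u : U, |p (u, v) - q (u, v)|) + |(∑ u : U, p (u, v)) - ∑ u : U, q (u, v)|) /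
        (2 * (∑ u : U, p (u, v)) * (∑ u : U, q (u, v)) /
          ((∑ u : U, p (u, v)) + ∑ u : U, q (u, v))) := by
  set P := ∑ u : U, p (u, v) with hP
  set Q := ∑ u : U, q (u, v) with hQ
  set S := ∑ u : U, |p (u, v) / P - q (u, v) / Q| with hS
  set D := ∑ u : U, |p (u, v) - q (u, v)| with hD
  have hPQ : 0 < P * Q := mul_pos hpv hqv
  have key1 : ∀ a b : ℝ, 0 ≤ b → |a / P - b / Q| ≤ |a - b| / P + b * |P - Q| / (P * Q) := by
    intro a b hb
    have e : a / P - b / Q = (a - b) / P + b * (Q - P) / (P * Q) := by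
      field_simp; ring
    rw [e]
    calc |(a - b) / P + b * (Q - P) / (P * Q)|
        ≤ |(a - b) / P| + |b * (Q - P) / (P * Q)| := abs_add_le _ _
      _ = |a - b| / P + b * |P - Q| / (P * Q) := by
          rw [abs_div, abs_div, abs_mul, abs_of_pos hpv, abs_of_pos hPQ,
            abs_of_nonneg hb, abs_sub_comm Q P]
  have key2 : ∀ a b : ℝ, 0 ≤ a → |a / P - b / Q| ≤ |a - b| / Q + a * |P - Q| / (P * Q) := by
    intro a b ha
    have e : a / P - b / Q = (a - b) / Q + a * (Q - P) / (P * Q) := by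
      field_simp; ring
    rw [e]
    calc |(a - b) / Q + a * (Q - P) / (P * Q)|
        ≤ |(a - b) / Q| + |a * (Q - P) / (P * Q)| := abs_add_le _ _
      _ = |a - b| / Q + a * |P - Q| / (P * Q) := by
          rw [abs_div, abs_div, abs_mul, abs_of_pos hqv, abs_of_pos hPQ,
            abs_of_nonneg ha, abs_sub_comm Q P]
  have h1 : S ≤ (D + |P - Q|) / P := by
    have : S ≤ ∑ u : U, (|p (u, v) - q (u, v)| / P + q (u, v) * |P - Q| / (P * Q)) :=
      Finset.sum_le_sum fun u _ => key1 _ _ (hq0 _)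
    rw [Finset.sum_add_distrib, ← Finset.sum_div, ← Finset.sum_div, ← Finset.sum_mul] at this
    rw [← hQ, ← hD] at this
    have e : D / P + Q * |P - Q| / (P * Q) = (D + |P - Q|) / P := by
      field_simp
    linarith [this, e.ge]
  have h2 : S ≤ (D + |P - Q|) / Q := by
    have : S ≤ ∑ u : U, (|p (u, v) - q (u, v)| / Q + p (u, v) * |P - Q| / (P * Q)) :=
      Finset.sum_le_sum fun u _ => key2 _ _ (hp0 _)
    rw [Finset.sum_add_distrib, ← Finset.sum_div, ← Finset.sum_div, ← Finset.sum_mul] at this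
    rw [← hP, ← hD] at this
    have e : D / Q + P * |P - Q| / (P * Q) = (D + |P - Q|) / Q := by
      field_simp
    linarith [this, e.ge]
  have e : (D + |P - Q|) / (2 * P * Q / (P + Q)) =
      ((D + |P - Q|) / P + (D + |P - Q|) / Q) / 2 := by
    have hPQ' : 0 < P + Q := by linarith
    field_simp
    ring
  rw [e]
  linarith
end

section
/- Let P and F be probability distributions on a finite product set A × Y × B (with A, Y, B nonempty finite sets representing Alice's outcome, Bob's settings/parents, and Bob's outcome). For a distribution Q, define the causal influence C(Q) = max over pairs (a,y), (a',y) with Q-marginal on (a,y) and (a',y) both positive of Σ_b |Q(b|a,y) − Q(b|a',y)|, where Q(b|a,y) = Q(a,y,b)/Q_{A×Y}(a,y). Suppose additionally that all marginals F_{A×Y}(a,y) and P_{A×Y}(a,y) are strictly positive. Then |C(P) − C(F)| ≤ 4‖P − F‖₁ / min_{(a,y)} H(P_{A×Y}(a,y), F_{A×Y}(a,y)), with H(x,y) = 2xy/(x+y). -/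
open Finset

variable {A Y B : Type*} [Fintype A] [Fintype Y] [Fintype B]
variable [Nonempty A] [Nonempty Y] [Nonempty B]

/-- Marginal of a distribution on `A × Y × B` over `B`. -/
noncomputable def margAY (Q : A × Y × B → ℝ) (a : A) (y : Y) : ℝ :=
  ∑ b : B, Q (a, y, b)

/-- Conditional distribution `Q(b | a, y)`. -/
noncomputable def condB (Q : A × Y × B → ℝ) (a : A) (y : Y) (b : B) : ℝ :=
  Q (a, y, b) / margAY Q a y

/-- The causal influence `C_{a→b}(Q) = max_{a,a',y} Σ_b |Q(b|a,y) − Q(b|a',y)|`. -/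
noncomputable def causalInfluence (Q : A × Y × B → ℝ) : ℝ :=
  Finset.univ.sup' Finset.univ_nonempty
    (fun t : A × A × Y => ∑ b : B, |condB Q t.1 t.2.2 b - condB Q t.2.1 t.2.2 b|)

lemma aux_cond {B : Type*} [Fintype B] (x y : B → ℝ) (hy : ∀ b, 0 ≤ y b)
    (hp : 0 < ∑ b, x b) (hf : 0 < ∑ b, y b) :
    ∑ b, |x b / (∑ c, x c) - y b / (∑ c, y c)| ≤ 2 * (∑ b, |x b - y b|) / (∑ b, x b) := by
  set p := ∑ b, x b with hpdef
  set f := ∑ b, y b with hfdef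
  have hD : |f - p| ≤ ∑ b, |x b - y b| := by
    have h1 : f - p = ∑ b, (y b - x b) := by rw [hpdef, hfdef, Finset.sum_sub_distrib]
    rw [h1]
    calc |∑ b, (y b - x b)| ≤ ∑ b, |y b - x b| := Finset.abs_sum_le_sum_abs _ _
      _ = ∑ b, |x b - y b| := by simp [abs_sub_comm]
  have key : ∀ b, |x b / p - y b / f| ≤ |x b - y b| / p + y b * |f - p| / (p * f) := by
    intro b
    have h2 : x b / p - y b / f = (x b - y b) / p + y b * (f - p) / (p * f) := by
      field_simp; ring
    rw [h2]
    calc |(x b - y b) / p + y b * (f - p) / (p * f)|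
        ≤ |(x b - y b) / p| + |y b * (f - p) / (p * f)| := abs_add_le _ _
      _ = |x b - y b| / p + y b * |f - p| / (p * f) := by
          simp [abs_div, abs_mul, abs_of_pos hp, abs_of_pos hf, abs_of_nonneg (hy b)]
  calc ∑ b, |x b / p - y b / f|
      ≤ ∑ b, (|x b - y b| / p + y b * |f - p| / (p * f)) :=
        Finset.sum_le_sum fun b _ => key b
    _ = (∑ b, |x b - y b|) / p + f * |f - p| / (p * f) := by
        rw [Finset.sum_add_distrib, ← Finset.sum_div, ← Finset.sum_div, ← Finset.sum_mul]
    _ = (∑ b, |x b - y b|) / p + |f - p| / p := by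
        congr 1
        field_simp
    _ ≤ (∑ b, |x b - y b|) / p + (∑ b, |x b - y b|) / p := by gcongr
    _ = 2 * (∑ b, |x b - y b|) / p := by ring

lemma cond_diff_le (P F : A × Y × B → ℝ)
    (hP0 : ∀ x, 0 ≤ P x) (hF0 : ∀ x, 0 ≤ F x) (a : A) (y : Y)
    (hp : 0 < margAY P a y) (hf : 0 < margAY F a y) :
    ∑ b, |condB P a y b - condB F a y b| ≤
      2 * (∑ b, |P (a, y, b) - F (a, y, b)|) / max (margAY P a y) (margAY F a y) := by
  rcases le_total (margAY F a y) (margAY P a y) with h | h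
  · rw [max_eq_left h]
    exact aux_cond (fun b => P (a, y, b)) (fun b => F (a, y, b)) (fun b => hF0 _) hp hf
  · rw [max_eq_right h]
    have h1 : ∑ b, |condB P a y b - condB F a y b| = ∑ b, |condB F a y b - condB P a y b| := by
      simp [abs_sub_comm]
    have h2 : (∑ b, |P (a, y, b) - F (a, y, b)|) = ∑ b, |F (a, y, b) - P (a, y, b)| := by
      simp [abs_sub_comm]
    rw [h1, h2]
    exact aux_cond (fun b => F (a, y, b)) (fun b => P (a, y, b)) (fun b => hP0 _) hf hp

/-- Lemma 3: `|C(P) − C(F)| ≤ 4‖P − F‖₁ / min_{(a,y)} H(P_{AY}(a,y), F_{AY}(a,y))`. -/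
theorem causalInfluence_diff_le_tvd_over_harmonic
    (P F : A × Y × B → ℝ)
    (hP0 : ∀ x, 0 ≤ P x) (hP1 : ∑ x, P x = 1)
    (hF0 : ∀ x, 0 ≤ F x) (hF1 : ∑ x, F x = 1)
    (hPm : ∀ a y, 0 < margAY P a y) (hFm : ∀ a y, 0 < margAY F a y) :
    |causalInfluence P - causalInfluence F| ≤
      4 * (∑ x, |P x - F x|) /
        Finset.univ.inf' Finset.univ_nonempty
          (fun t : A × Y =>
            2 * margAY P t.1 t.2 * margAY F t.1 t.2 /
              (margAY P t.1 t.2 + margAY F t.1 t.2)) := by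
  set m := Finset.univ.inf' Finset.univ_nonempty
      (fun t : A × Y =>
        2 * margAY P t.1 t.2 * margAY F t.1 t.2 /
          (margAY P t.1 t.2 + margAY F t.1 t.2)) with hmdef
  set T := ∑ x, |P x - F x| with hTdef
  have hT0 : 0 ≤ T := Finset.sum_nonneg fun x _ => abs_nonneg _
  have hm0 : 0 < m := by
    rw [hmdef, Finset.lt_inf'_iff]
    intro t _
    have hp := hPm t.1 t.2
    have hf := hFm t.1 t.2
    positivity
  have hm_le : ∀ a y, m ≤ max (margAY P a y) (margAY F a y) := by
    intro a y
    have h1 : m ≤ 2 * margAY P a y * margAY F a y / (margAY P a y + margAY F a y) :=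
      Finset.inf'_le _ (Finset.mem_univ (a, y))
    refine h1.trans ?_
    have hp := hPm a y
    have hf := hFm a y
    rw [div_le_iff₀ (by linarith)]
    rcases le_total (margAY P a y) (margAY F a y) with h | h
    · rw [max_eq_right h]; nlinarith
    · rw [max_eq_left h]; nlinarith
  have hD_le : ∀ a y, (∑ b, |P (a, y, b) - F (a, y, b)|) ≤ T := by
    intro a y
    rw [hTdef, Fintype.sum_prod_type]
    have h1 : (∑ b, |P (a, y, b) - F (a, y, b)|) ≤
        ∑ q : Y × B, |P (a, q.1, q.2) - F (a, q.1, q.2)| := by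
      rw [Fintype.sum_prod_type]
      exact Finset.single_le_sum
        (f := fun y' => ∑ b, |P (a, y', b) - F (a, y', b)|)
        (fun y' _ => Finset.sum_nonneg fun b _ => abs_nonneg _) (Finset.mem_univ y)
    refine h1.trans ?_
    exact Finset.single_le_sum
      (f := fun a' => ∑ q : Y × B, |P (a', q.1, q.2) - F (a', q.1, q.2)|)
      (fun a' _ => Finset.sum_nonneg fun q _ => abs_nonneg _) (Finset.mem_univ a)
  have hcond : ∀ a y, ∑ b, |condB P a y b - condB F a y b| ≤ 2 * T / m := by
    intro a y
    refine (cond_diff_le P F hP0 hF0 a y (hPm a y) (hFm a y)).trans ?_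
    gcongr
    · exact hD_le a y
    · exact hm_le a y
  have hkey : ∀ t : A × A × Y,
      abs ((∑ b : B, |condB P t.1 t.2.2 b - condB P t.2.1 t.2.2 b|) -
        ∑ b : B, |condB F t.1 t.2.2 b - condB F t.2.1 t.2.2 b|) ≤ 4 * T / m := by
    intro ⟨a, a', y⟩
    have h1 : abs ((∑ b : B, |condB P a y b - condB P a' y b|) -
        ∑ b : B, |condB F a y b - condB F a' y b|) ≤
        ∑ b : B, (|condB P a y b - condB F a y b| + |condB P a' y b - condB F a' y b|) := by
      rw [← Finset.sum_sub_distrib]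
      refine (Finset.abs_sum_le_sum_abs _ _).trans (Finset.sum_le_sum fun b _ => ?_)
      calc abs (|condB P a y b - condB P a' y b| - |condB F a y b - condB F a' y b|)
          ≤ |(condB P a y b - condB P a' y b) - (condB F a y b - condB F a' y b)| :=
            abs_abs_sub_abs_le_abs_sub _ _
        _ ≤ |condB P a y b - condB F a y b| + |condB P a' y b - condB F a' y b| := by
            rw [show (condB P a y b - condB P a' y b) - (condB F a y b - condB F a' y b) =
              (condB P a y b - condB F a y b) - (condB P a' y b - condB F a' y b) by ring]
            exact abs_sub _ _
    refine h1.trans ?_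
    rw [Finset.sum_add_distrib]
    have := hcond a y
    have := hcond a' y
    have : 2 * T / m + 2 * T / m = 4 * T / m := by ring
    linarith [hcond a y, hcond a' y]
  rw [abs_sub_le_iff]
  constructor
  · rw [sub_le_iff_le_add]
    unfold causalInfluence
    refine Finset.sup'_le _ _ fun t _ => ?_
    have h2 := (abs_sub_le_iff.mp (hkey t)).1
    have h3 := Finset.le_sup' (f := fun t : A × A × Y =>
      ∑ b : B, |condB F t.1 t.2.2 b - condB F t.2.1 t.2.2 b|) (Finset.mem_univ t)
    linarith
  · rw [sub_le_iff_le_add]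
    unfold causalInfluence
    refine Finset.sup'_le _ _ fun t _ => ?_
    have h2 := (abs_sub_le_iff.mp (hkey t)).2
    have h3 := Finset.le_sup' (f := fun t : A × A × Y =>
      ∑ b : B, |condB P t.1 t.2.2 b - condB P t.2.1 t.2.2 b|) (Finset.mem_univ t)
    linarith
end

section
/- Let P and F be probability distributions on a finite product set A × Y × B, with all marginals F_{A×Y}(a,y) and P_{A×Y}(a,y) strictly positive. Let f⋆ = min_{(a,y)} F_{A×Y}(a,y), let τ = ‖P − F‖₁, and suppose τ < 2 f⋆. Then |C(P) − C(F)| ≤ 2τ(4f⋆ − τ)/(f⋆(2f⋆ − τ)), where C(Q) = max_{a,a',y} Σ_b |Q(b|a,y) − Q(b|a',y)| is the causal influence. -/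
open Finset

variable {A Y B : Type*} [Fintype A] [Fintype Y] [Fintype B]
variable [Nonempty A] [Nonempty Y] [Nonempty B]

lemma causalInfluence_le_aux (P F : A × Y × B → ℝ) (ε : ℝ)
    (h : ∀ a y, ∑ b : B, |condB P a y b - condB F a y b| ≤ ε) :
    causalInfluence P ≤ causalInfluence F + 2 * ε := by
  unfold causalInfluence
  apply Finset.sup'_le
  rintro ⟨a, a', y⟩ -
  simp only
  have step : ∀ b : B, |condB P a y b - condB P a' y b| ≤
      |condB F a y b - condB F a' y b| +
        (|condB P a y b - condB F a y b| + |condB P a' y b - condB F a' y b|) := by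
    intro b
    calc |condB P a y b - condB P a' y b|
        = |(condB F a y b - condB F a' y b) +
            ((condB P a y b - condB F a y b) - (condB P a' y b - condB F a' y b))| := by
          ring_nf
      _ ≤ |condB F a y b - condB F a' y b| +
            |(condB P a y b - condB F a y b) - (condB P a' y b - condB F a' y b)| :=
          abs_add_le _ _
      _ ≤ _ := by gcongr; exact abs_sub _ _
  calc ∑ b : B, |condB P a y b - condB P a' y b|
      ≤ ∑ b : B, (|condB F a y b - condB F a' y b| +
          (|condB P a y b - condB F a y b| + |condB P a' y b - condB F a' y b|)) :=
        Finset.sum_le_sum fun b _ => step b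
    _ = (∑ b : B, |condB F a y b - condB F a' y b|) +
          ((∑ b : B, |condB P a y b - condB F a y b|) +
            (∑ b : B, |condB P a' y b - condB F a' y b|)) := by
        rw [Finset.sum_add_distrib, Finset.sum_add_distrib]
    _ ≤ (Finset.univ.sup' Finset.univ_nonempty
          (fun t : A × A × Y => ∑ b : B, |condB F t.1 t.2.2 b - condB F t.2.1 t.2.2 b|)) +
          (ε + ε) := by
        gcongr
        · exact Finset.le_sup' (f := fun t : A × A × Y =>
            ∑ b : B, |condB F t.1 t.2.2 b - condB F t.2.1 t.2.2 b|)
            (Finset.mem_univ (a, a', y))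
        · exact h a y
        · exact h a' y
    _ = _ := by ring

/-- Theorem 1 (all marginals positive): if `τ = ‖P − F‖₁ < 2 f⋆` with
`f⋆ = min_{(a,y)} F_{AY}(a,y)`, then
`|C(P) − C(F)| ≤ 2τ(4f⋆ − τ)/(f⋆(2f⋆ − τ))`. -/
theorem causalInfluence_diff_bound
    (P F : A × Y × B → ℝ)
    (hP0 : ∀ x, 0 ≤ P x) (hP1 : ∑ x, P x = 1)
    (hF0 : ∀ x, 0 ≤ F x) (hF1 : ∑ x, F x = 1)
    (hPm : ∀ a y, 0 < margAY P a y) (hFm : ∀ a y, 0 < margAY F a y)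
    (fstar τ : ℝ)
    (hfstar : fstar = Finset.univ.inf' Finset.univ_nonempty
      (fun t : A × Y => margAY F t.1 t.2))
    (hτ : τ = ∑ x, |P x - F x|)
    (hτlt : τ < 2 * fstar) :
    |causalInfluence P - causalInfluence F| ≤
      2 * τ * (4 * fstar - τ) / (fstar * (2 * fstar - τ)) := by
  have hτ0 : 0 ≤ τ := hτ ▸ Finset.sum_nonneg fun x _ => abs_nonneg _
  have hfs0 : 0 < fstar := by
    rw [hfstar]
    rw [Finset.lt_inf'_iff]
    exact fun t _ => hFm t.1 t.2
  -- τ rewritten as triple sum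
  have hτ3 : τ = ∑ a : A, ∑ y : Y, ∑ b : B, |P (a, y, b) - F (a, y, b)| := by
    rw [hτ, Fintype.sum_prod_type]
    exact Finset.sum_congr rfl fun a _ => Fintype.sum_prod_type _
  -- key conditional bound
  have key : ∀ a y, ∑ b : B, |condB P a y b - condB F a y b| ≤ 2 * τ / fstar := by
    intro a y
    have hp := hPm a y
    have hf := hFm a y
    have hfs : fstar ≤ margAY F a y := by
      rw [hfstar]
      exact Finset.inf'_le (fun t : A × Y => margAY F t.1 t.2) (Finset.mem_univ (a, y))
    set p := margAY P a y with hpdef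
    set f := margAY F a y with hfdef
    have hS : ∑ b : B, |P (a, y, b) - F (a, y, b)| ≤ τ := by
      rw [hτ3]
      have h1 : ∑ b : B, |P (a, y, b) - F (a, y, b)| ≤
          ∑ y' : Y, ∑ b : B, |P (a, y', b) - F (a, y', b)| :=
        Finset.single_le_sum (f := fun y' => ∑ b : B, |P (a, y', b) - F (a, y', b)|)
          (fun y' _ => Finset.sum_nonneg fun b _ => abs_nonneg _) (Finset.mem_univ y)
      refine h1.trans ?_
      exact Finset.single_le_sum (f := fun a' => ∑ y' : Y, ∑ b : B, |P (a', y', b) - F (a', y', b)|)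
        (fun a' _ => Finset.sum_nonneg fun y' _ => Finset.sum_nonneg fun b _ => abs_nonneg _)
        (Finset.mem_univ a)
    have hfp : |f - p| ≤ ∑ b : B, |P (a, y, b) - F (a, y, b)| := by
      have : f - p = ∑ b : B, (F (a, y, b) - P (a, y, b)) := by
        rw [hfdef, hpdef]
        unfold margAY
        rw [Finset.sum_sub_distrib]
      rw [this]
      refine (Finset.abs_sum_le_sum_abs _ _).trans ?_
      exact le_of_eq (Finset.sum_congr rfl fun b _ => abs_sub_comm _ _)
    have step : ∀ b : B, |condB P a y b - condB F a y b| ≤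
        |P (a, y, b) - F (a, y, b)| / f + P (a, y, b) * (|f - p| / (p * f)) := by
      intro b
      have heq : condB P a y b - condB F a y b =
          (P (a, y, b) - F (a, y, b)) / f + P (a, y, b) * ((f - p) / (p * f)) := by
        unfold condB
        rw [← hpdef, ← hfdef]
        field_simp
        ring
      rw [heq]
      refine (abs_add_le _ _).trans ?_
      gcongr
      · rw [abs_div, abs_of_pos hf]
      · rw [abs_mul, abs_of_nonneg (hP0 (a, y, b)), abs_div, abs_of_pos (mul_pos hp hf)]
    calc ∑ b : B, |condB P a y b - condB F a y b|
        ≤ ∑ b : B, (|P (a, y, b) - F (a, y, b)| / f + P (a, y, b) * (|f - p| / (p * f))) :=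
          Finset.sum_le_sum fun b _ => step b
      _ = (∑ b : B, |P (a, y, b) - F (a, y, b)|) / f + p * (|f - p| / (p * f)) := by
          rw [Finset.sum_add_distrib, ← Finset.sum_div, ← Finset.sum_mul]
          rfl
      _ = (∑ b : B, |P (a, y, b) - F (a, y, b)|) / f + |f - p| / f := by
          field_simp
      _ ≤ τ / f + τ / f := by
          have h' := hfp.trans hS
          gcongr
      _ = 2 * τ / f := by ring
      _ ≤ 2 * τ / fstar := by gcongr
  have key' : ∀ a y, ∑ b : B, |condB F a y b - condB P a y b| ≤ 2 * τ / fstar := by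
    intro a y
    simpa [abs_sub_comm] using key a y
  have h1 := causalInfluence_le_aux P F (2 * τ / fstar) key
  have h2 := causalInfluence_le_aux F P (2 * τ / fstar) key'
  have habs : |causalInfluence P - causalInfluence F| ≤ 2 * (2 * τ / fstar) := by
    rw [abs_sub_le_iff]
    constructor <;> linarith
  refine habs.trans ?_
  rw [show 2 * (2 * τ / fstar) = 4 * τ / fstar by ring,
    div_le_div_iff₀ hfs0 (by nlinarith : (0:ℝ) < fstar * (2 * fstar - τ))]
  nlinarith [mul_nonneg hτ0 hτ0, sq_nonneg fstar, mul_pos hfs0 hfs0, mul_nonneg (mul_nonneg hτ0 hτ0) hfs0.le]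
end

section
/- Let p and q be probability distributions on a finite product set U × V, fix v with p_V(v), q_V(v) > 0, and set μ = (p_V(v) + q_V(v))/2 and δ = (p_V(v) − q_V(v))/2. Then p_V(v)·q_V(v)·Σ_u |p(u|v) − q(u|v)| ≤ μ·(Σ_u |p(u,v) − q(u,v)| + 2|δ|). -/
/-- Key intermediate estimate in the proof of the harmonic-mean conditional bound:
with `μ = (p_V(v) + q_V(v))/2` and `δ = (p_V(v) − q_V(v))/2`,
`p_V(v)·q_V(v)·Σ_u |p(u|v) − q(u|v)| ≤ μ·(Σ_u |p(u,v) − q(u,v)| + 2|δ|)`. -/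
theorem conditional_tvd_mu_delta_bound {U V : Type*} [Fintype U] [Fintype V]
    (p q : U × V → ℝ)
    (hp0 : ∀ x, 0 ≤ p x) (hp1 : ∑ x, p x = 1)
    (hq0 : ∀ x, 0 ≤ q x) (hq1 : ∑ x, q x = 1)
    (v : V)
    (hpv : 0 < ∑ u : U, p (u, v)) (hqv : 0 < ∑ u : U, q (u, v)) :
    (∑ u : U, p (u, v)) * (∑ u : U, q (u, v)) *
        ∑ u : U, |p (u, v) / (∑ u' : U, p (u', v)) - q (u, v) / (∑ u' : U, q (u', v))| ≤
      (((∑ u : U, p (u, v)) + ∑ u : U, q (u, v)) / 2) *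
        ((∑ u : U, |p (u, v) - q (u, v)|) +
          2 * |((∑ u : U, p (u, v)) - ∑ u : U, q (u, v)) / 2|) := by
  set P := ∑ u : U, p (u, v) with hP
  set Q := ∑ u : U, q (u, v) with hQ
  set μ := (P + Q) / 2 with hμ
  set δ := (P - Q) / 2 with hδ
  have hPne : P ≠ 0 := ne_of_gt hpv
  have hQne : Q ≠ 0 := ne_of_gt hqv
  have key : P * Q * ∑ u : U, |p (u, v) / P - q (u, v) / Q|
      = ∑ u : U, |Q * p (u, v) - P * q (u, v)| := by
    rw [Finset.mul_sum]
    refine Finset.sum_congr rfl fun u _ => ?_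
    rw [← abs_of_pos (mul_pos hpv hqv), ← abs_mul]
    congr 1
    field_simp
  rw [key]
  calc ∑ u : U, |Q * p (u, v) - P * q (u, v)|
      ≤ ∑ u : U, (μ * |p (u, v) - q (u, v)| + |δ| * (p (u, v) + q (u, v))) := by
        refine Finset.sum_le_sum fun u _ => ?_
        have h : Q * p (u, v) - P * q (u, v)
            = μ * (p (u, v) - q (u, v)) - δ * (p (u, v) + q (u, v)) := by
          rw [hμ, hδ]; ring
        rw [h]
        calc |μ * (p (u, v) - q (u, v)) - δ * (p (u, v) + q (u, v))|
            ≤ |μ * (p (u, v) - q (u, v))| + |δ * (p (u, v) + q (u, v))| := abs_sub _ _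
          _ = |μ| * |p (u, v) - q (u, v)| + |δ| * |p (u, v) + q (u, v)| := by
              rw [abs_mul, abs_mul]
          _ = μ * |p (u, v) - q (u, v)| + |δ| * (p (u, v) + q (u, v)) := by
              have h1 : 0 < μ := by rw [hμ]; linarith
              have h2 : 0 ≤ p (u, v) + q (u, v) := by
                have := hp0 (u, v); have := hq0 (u, v); linarith
              rw [abs_of_pos h1, abs_of_nonneg h2]
    _ = μ * (∑ u : U, |p (u, v) - q (u, v)|) + |δ| * (P + Q) := by
        rw [Finset.sum_add_distrib, ← Finset.mul_sum, ← Finset.mul_sum,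
          Finset.sum_add_distrib]
    _ = μ * ((∑ u : U, |p (u, v) - q (u, v)|) + 2 * |δ|) := by
        rw [hμ]; ring
end

section
/- If a joint distribution on (a, b, x, y, λ) with binary a, b, x, y factorizes as Pr(a,b,x,y,λ) = Pr(a|x,λ)·Pr(b|y,λ)·Pr(x)·Pr(y)·Pr(λ) over a finite hidden variable λ, and a, b take values in {−1, +1}, then the CHSH quantity S = E[a b | x=0,y=0] − E[a b | x=1,y=0] + E[a b | x=0,y=1] + E[a b | x=1,y=1] satisfies |S| ≤ 2, provided Pr(x), Pr(y) > 0 for both settings. -/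
/-- CHSH inequality for locally causal (hidden variable) models: if the joint
distribution factorizes as `Pr(a,b,x,y,λ) = Pr(a|x,λ)Pr(b|y,λ)Pr(x)Pr(y)Pr(λ)`
with outcomes `a, b ∈ {−1,+1}` (encoded by `val`), then the CHSH quantity
satisfies `|S| ≤ 2`. -/
theorem chsh_local_hidden_variable {Λ : Type*} [Fintype Λ]
    (π : Λ → ℝ) (hπ0 : ∀ l, 0 ≤ π l) (hπ1 : ∑ l, π l = 1)
    (pA : Bool → Λ → Bool → ℝ)      -- Pr(a | x, λ), outcome indexed by Bool
    (pB : Bool → Λ → Bool → ℝ)      -- Pr(b | y, λ)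
    (hA0 : ∀ x l a, 0 ≤ pA x l a) (hA1 : ∀ x l, ∑ a, pA x l a = 1)
    (hB0 : ∀ y l b, 0 ≤ pB y l b) (hB1 : ∀ y l, ∑ b, pB y l b = 1)
    (px py : Bool → ℝ) (hpx : ∀ x, 0 < px x) (hpy : ∀ y, 0 < py y)
    (hpx1 : ∑ x, px x = 1) (hpy1 : ∑ y, py y = 1)
    (val : Bool → ℝ) (hval : val = fun o => if o then 1 else -1)
    (E : Bool → Bool → ℝ)
    (hE : ∀ x y, E x y = ∑ l, π l * (∑ a, val a * pA x l a) * (∑ b, val b * pB y l b)) :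
    |E false false - E true false + E false true + E true true| ≤ 2 := by
  set A : Bool → Λ → ℝ := fun x l => ∑ a, val a * pA x l a with hAdef
  set B : Bool → Λ → ℝ := fun y l => ∑ b, val b * pB y l b with hBdef
  have hAbd : ∀ x l, |A x l| ≤ 1 := by
    intro x l
    have : A x l = pA x l true - pA x l false := by
      simp [hAdef, hval, Fintype.sum_bool]; ring
    rw [this, abs_le]
    have h1 := hA1 x l; rw [Fintype.sum_bool] at h1
    constructor <;> nlinarith [hA0 x l true, hA0 x l false]
  have hBbd : ∀ y l, |B y l| ≤ 1 := by
    intro y l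
    have : B y l = pB y l true - pB y l false := by
      simp [hBdef, hval, Fintype.sum_bool]; ring
    rw [this, abs_le]
    have h1 := hB1 y l; rw [Fintype.sum_bool] at h1
    constructor <;> nlinarith [hB0 y l true, hB0 y l false]
  have key : E false false - E true false + E false true + E true true
      = ∑ l, π l * (A false l * B false l - A true l * B false l
          + A false l * B true l + A true l * B true l) := by
    simp only [hE]
    rw [← Finset.sum_sub_distrib, ← Finset.sum_add_distrib, ← Finset.sum_add_distrib]
    exact Finset.sum_congr rfl fun l _ => by ring
  rw [key]
  calc |∑ l, π l * (A false l * B false l - A true l * B false l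
          + A false l * B true l + A true l * B true l)|
      ≤ ∑ l, |π l * (A false l * B false l - A true l * B false l
          + A false l * B true l + A true l * B true l)| := Finset.abs_sum_le_sum_abs _ _
    _ ≤ ∑ l, π l * 2 := by
        apply Finset.sum_le_sum
        intro l _
        rw [abs_mul, abs_of_nonneg (hπ0 l)]
        apply mul_le_mul_of_nonneg_left _ (hπ0 l)
        have h1 := abs_le.mp (hAbd false l)
        have h2 := abs_le.mp (hAbd true l)
        have h3 := abs_le.mp (hBbd false l)
        have h4 := abs_le.mp (hBbd true l)
        rw [abs_le]
        obtain ⟨a1, a2⟩ := h1; obtain ⟨b1, b2⟩ := h2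
        obtain ⟨c1, c2⟩ := h3; obtain ⟨d1, d2⟩ := h4
        constructor <;>
          nlinarith [mul_nonneg (by linarith : (0:ℝ) ≤ 1 - A false l) (by linarith : (0:ℝ) ≤ 1 - B false l),
            mul_nonneg (by linarith : (0:ℝ) ≤ 1 - A false l) (by linarith : (0:ℝ) ≤ 1 + B false l),
            mul_nonneg (by linarith : (0:ℝ) ≤ 1 + A false l) (by linarith : (0:ℝ) ≤ 1 - B false l),
            mul_nonneg (by linarith : (0:ℝ) ≤ 1 + A false l) (by linarith : (0:ℝ) ≤ 1 + B false l),
            mul_nonneg (by linarith : (0:ℝ) ≤ 1 - A true l) (by linarith : (0:ℝ) ≤ 1 - B true l),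
            mul_nonneg (by linarith : (0:ℝ) ≤ 1 - A true l) (by linarith : (0:ℝ) ≤ 1 + B true l),
            mul_nonneg (by linarith : (0:ℝ) ≤ 1 + A true l) (by linarith : (0:ℝ) ≤ 1 - B true l),
            mul_nonneg (by linarith : (0:ℝ) ≤ 1 + A true l) (by linarith : (0:ℝ) ≤ 1 + B true l),
            mul_nonneg (by linarith : (0:ℝ) ≤ 1 - A false l) (by linarith : (0:ℝ) ≤ 1 - B true l),
            mul_nonneg (by linarith : (0:ℝ) ≤ 1 - A false l) (by linarith : (0:ℝ) ≤ 1 + B true l),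
            mul_nonneg (by linarith : (0:ℝ) ≤ 1 + A false l) (by linarith : (0:ℝ) ≤ 1 - B true l),
            mul_nonneg (by linarith : (0:ℝ) ≤ 1 + A false l) (by linarith : (0:ℝ) ≤ 1 + B true l),
            mul_nonneg (by linarith : (0:ℝ) ≤ 1 - A true l) (by linarith : (0:ℝ) ≤ 1 - B false l),
            mul_nonneg (by linarith : (0:ℝ) ≤ 1 - A true l) (by linarith : (0:ℝ) ≤ 1 + B false l),
            mul_nonneg (by linarith : (0:ℝ) ≤ 1 + A true l) (by linarith : (0:ℝ) ≤ 1 - B false l),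
            mul_nonneg (by linarith : (0:ℝ) ≤ 1 + A true l) (by linarith : (0:ℝ) ≤ 1 + B false l)]
    _ = 2 := by rw [← Finset.sum_mul, hπ1, one_mul]
end
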